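/- arXiv:2010.11332 — 3 statements merged into one kernel-verified Lean document; each statement's English description precedes it below -/
import Mathlib

section
/- Let (X, d) be a metric space, f : X → ℝ Lipschitz with constant L, x₁, …, xₙ, x⋆ ∈ X, and let ε₁, …, εₙ be independent real-valued random variables with E[εᵢ] = 0 and |εᵢ| ≤ b almost surely (b > 0). Set yᵢ = f(xᵢ) + εᵢ and let w₁, …, wₙ be nonnegative reals with Σᵢ wᵢ = 1. Then for every δ ∈ (0, 1), with probability at least 1 − δ, |Σᵢ wᵢ yᵢ − f(x⋆)| ≤ b·√(2·log(2/δ))·(Σᵢ wᵢ²)^{1/2} + L · Σᵢ wᵢ d(xᵢ, x⋆). -/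
/-!
Split `∑ wᵢ yᵢ - f x⋆ = ∑ wᵢ εᵢ + ∑ wᵢ (f xᵢ - f x⋆)`. Since the weights form a probability
vector, the bias term is at most `L ∑ wᵢ d(xᵢ, x⋆)`. By Hoeffding's lemma each `εᵢ` is
sub-Gaussian with variance proxy `b²`, so by independence the noise term `∑ wᵢ εᵢ` is
sub-Gaussian with proxy `b² ∑ wᵢ²`, and the two-sided Chernoff bound puts it below
`b √(2 log (2/δ)) ‖w‖₂` except on an event of probability at most `δ`.
-/

open MeasureTheory ProbabilityTheory Real Finset
open scoped NNReal

namespace ProbabilityTheory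

variable {Ω : Type*} {mΩ : MeasurableSpace Ω} {μ : Measure Ω}

lemma hasSubgaussianMGF_of_abs_le [IsProbabilityMeasure μ] {X : Ω → ℝ} {b : ℝ}
    (hm : AEMeasurable X μ) (hb : ∀ᵐ ω ∂μ, |X ω| ≤ b) (hc : μ[X] = 0) :
    HasSubgaussianMGF X (‖b‖₊ ^ 2) μ := by
  have h := hasSubgaussianMGF_of_mem_Icc_of_integral_eq_zero hm
    (hb.mono fun ω hω ↦ abs_le.mp hω) hc
  convert h using 2
  rw [sub_neg_eq_add, ← two_mul, nnnorm_mul]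
  simp

namespace HasSubgaussianMGF

lemma sum_mul_of_iIndepFun {ι : Type*} {X : ι → Ω → ℝ} (h_indep : iIndepFun X μ) {c : ℝ≥0}
    {s : Finset ι} (h_subG : ∀ i ∈ s, HasSubgaussianMGF (X i) c μ) (w : ι → ℝ) :
    HasSubgaussianMGF (fun ω ↦ ∑ i ∈ s, w i * X i ω) ((∑ i ∈ s, ‖w i‖₊ ^ 2) * c) μ := by
  rw [sum_mul]
  refine sum_of_iIndepFun (X := fun i ω ↦ w i * X i ω)
    (h_indep.comp (fun i x ↦ w i * x) fun i ↦ measurable_const_mul (w i)) fun i hi ↦ ?_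
  convert (h_subG i hi).const_mul (w i) using 2
  ext
  simp only [NNReal.coe_mul, coe_nnnorm, norm_eq_abs, NNReal.coe_pow, sq_abs]
  rfl

lemma measure_abs_ge_le {X : Ω → ℝ} {c : ℝ≥0} (h : HasSubgaussianMGF X c μ) {ε : ℝ} (hε : 0 ≤ ε) :
    μ.real {ω | ε ≤ |X ω|} ≤ 2 * exp (-ε ^ 2 / (2 * c)) := by
  have h_union : {ω | ε ≤ |X ω|} = {ω | ε ≤ X ω} ∪ {ω | ε ≤ (-X) ω} := by
    ext ω
    simp [le_abs]
  calc μ.real {ω | ε ≤ |X ω|} ≤ μ.real {ω | ε ≤ X ω} + μ.real {ω | ε ≤ (-X) ω} := by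
        rw [h_union]
        exact measureReal_union_le _ _
    _ ≤ exp (-ε ^ 2 / (2 * c)) + exp (-ε ^ 2 / (2 * c)) :=
        add_le_add (h.measure_ge_le hε) (h.neg.measure_ge_le hε)
    _ = 2 * exp (-ε ^ 2 / (2 * c)) := by ring

lemma measure_abs_le_sqrt_log_ge [IsProbabilityMeasure μ] {X : Ω → ℝ} {c : ℝ≥0}
    (h : HasSubgaussianMGF X c μ) (hc : 0 < c) {δ : ℝ} (hδ : 0 < δ) :
    ENNReal.ofReal (1 - δ) ≤ μ {ω | |X ω| ≤ √(2 * c * log (2 / δ))} := by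
  rcases le_or_gt 1 δ with hδ1 | hδ1
  · simp [ENNReal.ofReal_eq_zero.mpr (sub_nonpos.mpr hδ1)]
  set T := √(2 * c * log (2 / δ))
  have hlog : 0 ≤ log (2 / δ) := log_nonneg (by rw [le_div_iff₀ hδ]; linarith)
  have h_exp : exp (-T ^ 2 / (2 * c)) = δ / 2 := by
    rw [sq_sqrt (by positivity), neg_div, mul_div_cancel_left₀ _ (by positivity), exp_neg,
      exp_log (by positivity), inv_div]
  have h_tail : μ.real {ω | T < |X ω|} ≤ δ :=
    calc μ.real {ω | T < |X ω|} ≤ μ.real {ω | T ≤ |X ω|} :=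
          measureReal_mono fun ω (hω : T < |X ω|) ↦ hω.le
      _ ≤ δ := by linarith [h.measure_abs_ge_le (ε := T) (sqrt_nonneg _)]
  have h_compl : {ω | |X ω| ≤ T}ᶜ = {ω | T < |X ω|} := by
    ext ω
    simp
  have h_meas : NullMeasurableSet {ω | |X ω| ≤ T} μ :=
    nullMeasurableSet_le h.aemeasurable.abs aemeasurable_const
  have h_prob := probReal_compl_eq_one_sub₀ h_meas
  rw [h_compl] at h_prob
  rw [← ofReal_measureReal]
  exact ENNReal.ofReal_le_ofReal (by linarith)

end HasSubgaussianMGF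

end ProbabilityTheory

lemma abs_sum_mul_sub_le_of_abs_sub_le {ι X : Type*} [PseudoMetricSpace X] {f : X → ℝ} {L : ℝ}
    (hf : ∀ x x' : X, |f x - f x'| ≤ L * dist x x') {s : Finset ι} {w : ι → ℝ}
    (hw : ∀ i ∈ s, 0 ≤ w i) (hw1 : ∑ i ∈ s, w i = 1) (x : ι → X) (xs : X) :
    |∑ i ∈ s, w i * f (x i) - f xs| ≤ L * ∑ i ∈ s, w i * dist (x i) xs :=
  calc |∑ i ∈ s, w i * f (x i) - f xs| = |∑ i ∈ s, w i * (f (x i) - f xs)| := by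
        simp only [mul_sub, sum_sub_distrib, ← sum_mul, hw1, one_mul]
    _ ≤ ∑ i ∈ s, w i * |f (x i) - f xs| := by
        refine (abs_sum_le_sum_abs _ _).trans_eq (sum_congr rfl fun i hi ↦ ?_)
        rw [abs_mul, abs_of_nonneg (hw i hi)]
    _ ≤ ∑ i ∈ s, w i * (L * dist (x i) xs) :=
        sum_le_sum fun i hi ↦ mul_le_mul_of_nonneg_left (hf _ _) (hw i hi)
    _ = L * ∑ i ∈ s, w i * dist (x i) xs := by
        rw [mul_sum]
        exact sum_congr rfl fun i _ ↦ by ring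

/-- Proposition 1 of the paper (Anava–Levy bias–variance bound for weighted
nearest-neighbor regression): with probability at least `1 - δ`,
`|∑ i, w i * y i - f x⋆| ≤ b √(2 log(2/δ)) ‖w‖₂ + L ∑ i, w i d(x i, x⋆)`. -/
theorem stmt_2 {X : Type*} [MetricSpace X]
    {Ω : Type*} [MeasureSpace Ω] [IsProbabilityMeasure (ℙ : Measure Ω)]
    {n : ℕ} (f : X → ℝ) (L : ℝ)
    (hf : ∀ x x' : X, |f x - f x'| ≤ L * dist x x')
    (x : Fin n → X) (xs : X)
    (ε : Fin n → Ω → ℝ) (hmeas : ∀ i, Measurable (ε i))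
    (hindep : iIndepFun ε ℙ)
    (b : ℝ) (hb : 0 < b)
    (hmean : ∀ i, ∫ ω, ε i ω ∂ℙ = 0)
    (hbdd : ∀ i, ∀ᵐ ω ∂ℙ, |ε i ω| ≤ b)
    (y : Fin n → Ω → ℝ) (hy : ∀ i ω, y i ω = f (x i) + ε i ω)
    (w : Fin n → ℝ) (hw : ∀ i, 0 ≤ w i) (hw1 : ∑ i, w i = 1)
    (δ : ℝ) (hδ : δ ∈ Set.Ioo (0 : ℝ) 1) :
    ENNReal.ofReal (1 - δ) ≤
      ℙ {ω | |(∑ i, w i * y i ω) - f xs| ≤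
        b * Real.sqrt (2 * Real.log (2 / δ)) * Real.sqrt (∑ i, (w i) ^ 2)
          + L * ∑ i, w i * dist (x i) xs} := by
  set c : ℝ≥0 := (∑ i, ‖w i‖₊ ^ 2) * ‖b‖₊ ^ 2
  have h_subG : HasSubgaussianMGF (fun ω ↦ ∑ i, w i * ε i ω) c ℙ :=
    .sum_mul_of_iIndepFun hindep
      (fun i _ ↦ hasSubgaussianMGF_of_abs_le (hmeas i).aemeasurable (hbdd i) (hmean i)) w
  have hc : 0 < c := by
    obtain ⟨i, -, hi⟩ := exists_ne_zero_of_sum_ne_zero (hw1 ▸ one_ne_zero)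
    have : 0 < ∑ i, ‖w i‖₊ ^ 2 :=
      sum_pos' (fun _ _ ↦ zero_le) ⟨i, mem_univ i, pow_pos (nnnorm_pos.mpr hi) 2⟩
    exact mul_pos this (pow_pos (nnnorm_pos.mpr hb.ne') 2)
  have h_threshold : √(2 * c * log (2 / δ)) = b * √(2 * log (2 / δ)) * √(∑ i, w i ^ 2) := by
    have hc_eq : (c : ℝ) = b ^ 2 * ∑ i, w i ^ 2 := by
      simp only [c, NNReal.coe_mul, NNReal.coe_sum, NNReal.coe_pow, coe_nnnorm, norm_eq_abs,
        sq_abs, mul_comm]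
    rw [hc_eq, show 2 * (b ^ 2 * ∑ i, w i ^ 2) * log (2 / δ)
        = b ^ 2 * (2 * log (2 / δ)) * ∑ i, w i ^ 2 by ring,
      sqrt_mul' _ (sum_nonneg fun i _ ↦ sq_nonneg _), sqrt_mul (sq_nonneg b), sqrt_sq hb.le]
  refine (h_threshold ▸ h_subG.measure_abs_le_sqrt_log_ge hc hδ.1).trans
    (measure_mono fun ω hω ↦ ?_)
  calc |∑ i, w i * y i ω - f xs|
        = |∑ i, w i * ε i ω + (∑ i, w i * f (x i) - f xs)| := by
          simp only [hy, mul_add, sum_add_distrib]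
          ring_nf
    _ ≤ |∑ i, w i * ε i ω| + |∑ i, w i * f (x i) - f xs| := abs_add_le _ _
    _ ≤ _ := add_le_add hω
          (abs_sum_mul_sub_le_of_abs_sub_le hf (fun i _ ↦ hw i) hw1 x xs)
end

section
/- Let n ≥ 1, let e : Fin n × Fin n → ℝ be nonnegative similarity weights, let a : Fin n → Bool be a treatment assignment, and let y₁, …, yₙ ∈ [0, 1]. For each i define the degree dᵢ = Σⱼ e_{ij}, the cut degree dᵢᶜ = Σ_{j : a_j ≠ a_i} e_{ij}, and d_min = minᵢ dᵢ. Assume dᵢᶜ > 0 for every i (hence dᵢ > 0 and d_min > 0). Then for every i, |(Σⱼ e_{ij} yⱼ)/dᵢ − (Σ_{j : a_j ≠ a_i} e_{ij} yⱼ)/dᵢᶜ| ≤ (dᵢ − dᵢᶜ)/d_min. -/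
open Finset

/-- Pointwise lemma from the proof of Proposition 2: the full-graph
kernel-regression prediction at unit `i` and the cut-regression prediction
(using only units with the opposite treatment arm) differ by at most
`(d i - dc i) / d_min`, provided outcomes lie in `[0,1]` and all cut
degrees are positive. -/
theorem stmt_3 {n : ℕ} (hn : 1 ≤ n)
    (e : Fin n × Fin n → ℝ) (he : ∀ p, 0 ≤ e p)
    (a : Fin n → Bool) (y : Fin n → ℝ) (hy : ∀ i, y i ∈ Set.Icc (0 : ℝ) 1)
    (d : Fin n → ℝ) (hd : ∀ i, d i = ∑ j, e (i, j))
    (dc : Fin n → ℝ)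
    (hdc : ∀ i, dc i = ∑ j ∈ univ.filter (fun j => a j ≠ a i), e (i, j))
    (dmin : ℝ)
    (hdmin : dmin = univ.inf' ⟨⟨0, hn⟩, mem_univ _⟩ d)
    (hpos : ∀ i, 0 < dc i) :
    ∀ i, |(∑ j, e (i, j) * y j) / d i
          - (∑ j ∈ univ.filter (fun j => a j ≠ a i), e (i, j) * y j) / dc i|
        ≤ (d i - dc i) / dmin := by
  have hdge : ∀ k, dc k ≤ d k := fun k => by
    rw [hd k, hdc k]
    exact sum_le_sum_of_subset_of_nonneg (filter_subset _ _) (fun j _ _ => he _)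
  have hdposall : ∀ k, 0 < d k := fun k => lt_of_lt_of_le (hpos k) (hdge k)
  have hdmin_pos : 0 < dmin := by
    rw [hdmin]
    obtain ⟨i0, -, h⟩ := Finset.exists_mem_eq_inf' (⟨⟨0, hn⟩, mem_univ _⟩ :
      (univ : Finset (Fin n)).Nonempty) d
    rw [h]; exact hdposall i0
  intro i
  have hdci := hpos i
  have hdipos := hdposall i
  have hdmin_le : dmin ≤ d i := by
    rw [hdmin]; exact Finset.inf'_le _ (mem_univ i)
  set S := univ.filter (fun j => a j ≠ a i) with hS
  set B := ∑ j ∈ S, e (i, j) * y j with hB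
  set R := ∑ j ∈ Sᶜ, e (i, j) * y j with hR
  set r := ∑ j ∈ Sᶜ, e (i, j) with hr
  have hA : (∑ j, e (i, j) * y j) = B + R := (Finset.sum_add_sum_compl S _).symm
  have hdd : d i = dc i + r := by
    rw [hd, hdc i]; exact (Finset.sum_add_sum_compl S _).symm
  have hB0 : 0 ≤ B := Finset.sum_nonneg fun j _ => mul_nonneg (he _) (hy j).1
  have hR0 : 0 ≤ R := Finset.sum_nonneg fun j _ => mul_nonneg (he _) (hy j).1
  have hr0 : 0 ≤ r := Finset.sum_nonneg fun j _ => he _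
  have hBle : B ≤ dc i := by
    rw [hdc i]
    exact Finset.sum_le_sum fun j _ => mul_le_of_le_one_right (he _) (hy j).2
  have hRle : R ≤ r :=
    Finset.sum_le_sum fun j _ => mul_le_of_le_one_right (he _) (hy j).2
  have key : (B + R) / d i - B / dc i = (R * dc i - B * r) / (d i * dc i) := by
    have hne : dc i + r ≠ 0 := by linarith
    rw [hdd]
    field_simp
    ring
  rw [hA, key]
  have h1 : |R * dc i - B * r| ≤ r * dc i := by
    rw [abs_le]
    constructor <;> nlinarith
  have hrd : d i - dc i = r := by linarith
  rw [abs_div, abs_of_pos (mul_pos hdipos hdci), hrd]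
  calc |R * dc i - B * r| / (d i * dc i) ≤ (r * dc i) / (d i * dc i) := by gcongr
    _ = r / d i := by rw [mul_div_mul_right _ _ (ne_of_gt hdci)]
    _ ≤ r / dmin := by gcongr
end

section
/- Let n ≥ 1, let e : Fin n × Fin n → ℝ be nonnegative similarity weights, let a : Fin n → Bool be a treatment assignment, and let y₁, …, yₙ ∈ [0, 1]. For each i define the degree dᵢ = Σⱼ e_{ij}, the cut degree dᵢᶜ = Σ_{j : a_j ≠ a_i} e_{ij}, d_min = minᵢ dᵢ, and e_sum = Σ_{i,j} e_{ij}. Assume dᵢᶜ > 0 for every i (hence d_min > 0). Then Σᵢ |(Σ_{j : a_j ≠ a_i} e_{ij} yⱼ)/dᵢᶜ − yᵢ| ≤ Σᵢ |yᵢ − (Σⱼ e_{ij} yⱼ)/dᵢ| + (e_sum − Σ_{i,j : a_i ≠ a_j} e_{ij})/d_min. -/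
open Finset

/-- Proposition 2 of the paper: the total counterfactual-regression risk is
bounded by the irreducible full-graph regression error plus
`(e_sum - cut weight) / d_min`, so it is minimized by the maximum cut. -/
theorem stmt_4 {n : ℕ} (hn : 1 ≤ n)
    (e : Fin n × Fin n → ℝ) (he : ∀ p, 0 ≤ e p)
    (a : Fin n → Bool) (y : Fin n → ℝ) (hy : ∀ i, y i ∈ Set.Icc (0 : ℝ) 1)
    (d : Fin n → ℝ) (hd : ∀ i, d i = ∑ j, e (i, j))
    (dc : Fin n → ℝ)
    (hdc : ∀ i, dc i = ∑ j ∈ univ.filter (fun j => a j ≠ a i), e (i, j))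
    (dmin : ℝ)
    (hdmin : dmin = univ.inf' ⟨⟨0, hn⟩, mem_univ _⟩ d)
    (esum : ℝ) (hesum : esum = ∑ p : Fin n × Fin n, e p)
    (hpos : ∀ i, 0 < dc i) :
    ∑ i, |(∑ j ∈ univ.filter (fun j => a j ≠ a i), e (i, j) * y j) / dc i - y i|
      ≤ (∑ i, |y i - (∑ j, e (i, j) * y j) / d i|)
        + (esum - ∑ p ∈ univ.filter (fun p : Fin n × Fin n => a p.1 ≠ a p.2), e p)
            / dmin := by
  have hdpos : ∀ i, 0 < d i := by
    intro i
    have h1 : dc i ≤ d i := by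
      rw [hd, hdc]
      exact Finset.sum_le_sum_of_subset_of_nonneg (filter_subset _ _)
        (fun j _ _ => he _)
    exact lt_of_lt_of_le (hpos i) h1
  have hdminpos : 0 < dmin := by
    obtain ⟨i, _, hi⟩ := Finset.exists_mem_eq_inf' (⟨⟨0, hn⟩, mem_univ _⟩ :
      (univ : Finset (Fin n)).Nonempty) d
    rw [hdmin, hi]; exact hdpos i
  have hdminle : ∀ i, dmin ≤ d i := fun i => hdmin ▸ Finset.inf'_le _ (mem_univ i)
  have key : ∀ i, |(∑ j ∈ univ.filter (fun j => a j ≠ a i), e (i, j) * y j) / dc i - y i|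
      ≤ |y i - (∑ j, e (i, j) * y j) / d i| + (d i - dc i) / dmin := by
    intro i
    set c := dc i with hc
    set D := d i with hD
    set S := ∑ j ∈ univ.filter (fun j => a j ≠ a i), e (i, j) * y j with hS
    set T := ∑ j ∈ univ.filter (fun j => ¬ (a j ≠ a i)), e (i, j) * y j with hT
    have hST : (∑ j, e (i, j) * y j) = S + T :=
      (Finset.sum_filter_add_sum_filter_not _ _ _).symm
    have hcT : D - c = ∑ j ∈ univ.filter (fun j => ¬ (a j ≠ a i)), e (i, j) := by
      rw [hD, hd, hc, hdc, ← Finset.sum_filter_add_sum_filter_not univ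
        (fun j => a j ≠ a i) (fun j => e (i, j))]
      ring
    have hSnn : 0 ≤ S := Finset.sum_nonneg fun j _ => mul_nonneg (he _) ((hy j).1)
    have hSle : S ≤ c := by
      rw [hc, hdc]
      exact Finset.sum_le_sum fun j _ => by nlinarith [(hy j).2, he (i, j), (hy j).1]
    have hTnn : 0 ≤ T := Finset.sum_nonneg fun j _ => mul_nonneg (he _) ((hy j).1)
    have hTle : T ≤ D - c := by
      rw [hcT]
      exact Finset.sum_le_sum fun j _ => by nlinarith [(hy j).2, he (i, j), (hy j).1]
    have hcpos : 0 < c := hpos i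
    have hDpos : 0 < D := hdpos i
    have hp : |S / c - (S + T) / D| ≤ (D - c) / dmin := by
      have h1 : S / c - (S + T) / D = ((D - c) * (S / c) - T) / D := by
        field_simp; ring
      rw [h1]
      have hp1 : 0 ≤ S / c := div_nonneg hSnn hcpos.le
      have hp2 : S / c ≤ 1 := (div_le_one hcpos).mpr hSle
      have hdc' : 0 ≤ D - c := by linarith
      have hnum : |(D - c) * (S / c) - T| ≤ D - c := by
        rw [abs_le]; constructor <;> nlinarith
      calc |((D - c) * (S / c) - T) / D| = |(D - c) * (S / c) - T| / D := by
            rw [abs_div, abs_of_pos hDpos]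
        _ ≤ (D - c) / dmin :=
            div_le_div₀ hdc' hnum hdminpos (hdminle i)
    calc |S / c - y i| ≤ |S / c - (S + T) / D| + |(S + T) / D - y i| :=
          abs_sub_le _ _ _
      _ = |y i - (S + T) / D| + |S / c - (S + T) / D| := by
          rw [abs_sub_comm ((S + T) / D)]; ring
      _ ≤ |y i - (∑ j, e (i, j) * y j) / D| + (D - c) / dmin := by
          rw [hST]; linarith
  have hcut : (∑ p ∈ univ.filter (fun p : Fin n × Fin n => a p.1 ≠ a p.2), e p)
      = ∑ i, dc i := by
    rw [Finset.sum_filter, Fintype.sum_prod_type]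
    refine Finset.sum_congr rfl fun i _ => ?_
    rw [hdc i, Finset.sum_filter]
    refine Finset.sum_congr rfl fun j _ => ?_
    by_cases h : a i = a j <;> simp [h, Ne, eq_comm]
  have hesum' : esum = ∑ i, d i := by
    rw [hesum, Fintype.sum_prod_type]
    exact Finset.sum_congr rfl fun i _ => (hd i).symm
  calc ∑ i, |(∑ j ∈ univ.filter (fun j => a j ≠ a i), e (i, j) * y j) / dc i - y i|
      ≤ ∑ i, (|y i - (∑ j, e (i, j) * y j) / d i| + (d i - dc i) / dmin) :=
        Finset.sum_le_sum fun i _ => key i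
    _ = (∑ i, |y i - (∑ j, e (i, j) * y j) / d i|) + (∑ i, (d i - dc i)) / dmin := by
        rw [Finset.sum_add_distrib, Finset.sum_div]
    _ = (∑ i, |y i - (∑ j, e (i, j) * y j) / d i|)
        + (esum - ∑ p ∈ univ.filter (fun p : Fin n × Fin n => a p.1 ≠ a p.2), e p)
            / dmin := by
        rw [hcut, hesum', Finset.sum_sub_distrib]
end
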